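/- The center of R = R_n(K,J) equals Ann R + (J ∩ C(K))·E, where E is the identity matrix of order n; that is, a matrix is central in R if and only if it is a sum of an annihilator element a e_{n,1} with a ∈ Ann_K(J) and a scalar matrix cE with c ∈ J ∩ C(K). -/

import Mathlib

/-- Membership in `R = R_n(K,J)`: entries on and above the main diagonal lie in `J`. -/
def Rmem {K : Type*} [Ring K] {n : ℕ} (J : AddSubgroup K)
    (M : Matrix (Fin n) (Fin n) K) : Prop :=
  ∀ i j : Fin n, i ≤ j → M i j ∈ J

/-!
A matrix `M` commuting with `e_{kl} b` satisfies `M_{kk} b = b M_{ll}`, its column `k` vanishes off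
row `k` and its row `l` vanishes off column `l`. Every strictly lower `e_{kl} b` lies in `R`, so
testing against `e_{k1}` (`k > 1`) and `e_{nl}` (`l < n`) clears every off-diagonal entry of a
central `M` except `M_{n1}`, and `e_{n1} b` makes the diagonal a constant commuting with all of
`K`. The entry `M_{n1}` is only constrained by the diagonal `e_{jj} y`, `y ∈ J`, which make it a
two-sided annihilator of `J`. Conversely `e_{n1} a` kills `R` on both sides, since row `1` and
column `n` of a matrix in `R` have entries in `J`.
-/

namespace Matrix

variable {ι α : Type*} [DecidableEq ι] [Semiring α]

theorem eq_single_add_smul_one {M : Matrix ι ι α} {i j : ι} (hij : i ≠ j) {c : α}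
    (hdiag : ∀ k, M k k = c) (hoff : ∀ k l, k ≠ l → (k, l) ≠ (i, j) → M k l = 0) :
    M = single i j (M i j) + c • (1 : Matrix ι ι α) := by
  ext k l
  rcases eq_or_ne k l with rfl | hkl
  · have : ¬(i = k ∧ j = k) := fun h => hij (h.1.trans h.2.symm)
    simp [hdiag, this]
  · by_cases hkl' : (k, l) = (i, j)
    · obtain ⟨rfl, rfl⟩ := Prod.mk.inj hkl'
      simp [hkl]
    · have : ¬(i = k ∧ j = l) := by rintro ⟨rfl, rfl⟩; exact hkl' rfl
      simp [hoff k l hkl hkl', this, hkl]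

variable [Fintype ι]

section Commute

variable {M : Matrix ι ι α} {i j : ι} {b : α}

theorem apply_mul_eq_zero_of_commute_single (h : Commute M (single i j b)) {k : ι}
    (hki : k ≠ i) : M k i * b = 0 := by
  simpa [hki] using congrFun (congrFun h.eq k) j

theorem mul_apply_eq_zero_of_commute_single (h : Commute M (single i j b)) {k : ι}
    (hkj : k ≠ j) : b * M j k = 0 := by
  simpa [hkj] using (congrFun (congrFun h.eq i) k).symm

theorem apply_mul_eq_mul_apply_of_commute_single (h : Commute M (single i j b)) :
    M i i * b = b * M j j := by
  simpa using congrFun (congrFun h.eq i) j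

end Commute

theorem commute_single_add_smul_one {X : Matrix ι ι α} {i j : ι} {a c : α}
    (hrow : ∀ k, a * X j k = 0) (hcol : ∀ k, X k i * a = 0) (hc : ∀ b, c * b = b * c) :
    Commute (single i j a + c • (1 : Matrix ι ι α)) X := by
  have hleft : single i j a * X = 0 := by
    ext k l
    rcases eq_or_ne k i with rfl | hki
    · simp [hrow]
    · simp [hki]
  have hright : X * single i j a = 0 := by
    ext k l
    rcases eq_or_ne l j with rfl | hlj
    · simp [hcol]
    · simp [hlj]
  have hscalar : Commute (c • (1 : Matrix ι ι α)) X := by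
    rw [smul_one_eq_diagonal]
    exact scalar_commute c hc X
  exact Commute.add_left (hleft.trans hright.symm) hscalar

end Matrix

section Centralizer

variable {K : Type*} [Ring K] {n : ℕ} {J : AddSubgroup K}

theorem Rmem_single_of_lt {k l : Fin n} (hlk : l < k) (y : K) :
    Rmem J (Matrix.single k l y) := by
  intro i j hij
  rw [Matrix.single_apply_of_ne]
  · exact J.zero_mem
  · rintro ⟨rfl, rfl⟩
    exact absurd hij (not_le.mpr hlk)

theorem Rmem_single_of_mem (k l : Fin n) {y : K} (hy : y ∈ J) :
    Rmem J (Matrix.single k l y) := by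
  intro i j _
  rw [Matrix.single_apply]
  split_ifs
  · exact hy
  · exact J.zero_mem

variable {M : Matrix (Fin n) (Fin n) K}

theorem diag_eq_of_forall_commute (hM : ∀ X, Rmem J X → M * X = X * M) (i j : Fin n) :
    M i i = M j j := by
  rcases lt_trichotomy i j with h | rfl | h
  · simpa using (Matrix.apply_mul_eq_mul_apply_of_commute_single
      (hM _ (Rmem_single_of_lt h (1 : K)))).symm
  · rfl
  · simpa using Matrix.apply_mul_eq_mul_apply_of_commute_single
      (hM _ (Rmem_single_of_lt h (1 : K)))

theorem diag_mul_comm_of_forall_commute (hM : ∀ X, Rmem J X → M * X = X * M) {k l : Fin n}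
    (hlk : l < k) (b : K) : M l l * b = b * M l l := by
  have h := Matrix.apply_mul_eq_mul_apply_of_commute_single (hM _ (Rmem_single_of_lt hlk b))
  rwa [diag_eq_of_forall_commute hM k l] at h

theorem apply_eq_zero_of_forall_commute (hM : ∀ X, Rmem J X → M * X = X * M) {i j : Fin n}
    (hij : i ≠ j) (h : 0 < (j : ℕ) ∨ (i : ℕ) + 1 < n) : M i j = 0 := by
  rcases h with hj | hi
  · simpa using Matrix.apply_mul_eq_zero_of_commute_single
      (hM _ (Rmem_single_of_lt (l := ⟨0, by omega⟩) (Fin.mk_lt_mk.mpr hj) (1 : K))) hij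
  · simpa using Matrix.mul_apply_eq_zero_of_commute_single
      (hM _ (Rmem_single_of_lt (k := ⟨n - 1, by omega⟩) (Fin.mk_lt_mk.mpr (by omega)) (1 : K)))
      hij.symm

theorem apply_mul_eq_zero_of_forall_commute (hM : ∀ X, Rmem J X → M * X = X * M) {i j : Fin n}
    (hij : i ≠ j) {y : K} (hy : y ∈ J) : M i j * y = 0 ∧ y * M i j = 0 :=
  ⟨Matrix.apply_mul_eq_zero_of_commute_single (hM _ (Rmem_single_of_mem j j hy)) hij,
    Matrix.mul_apply_eq_zero_of_commute_single (hM _ (Rmem_single_of_mem i i hy)) hij.symm⟩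

end Centralizer

/-- The center of `R = R_n(K,J)` equals `Ann R + (J ∩ C(K))·E`:
a matrix `M ∈ R` is central iff `M = a e_{n,1} + c E` with `a ∈ Ann_K(J)` and
`c ∈ J ∩ C(K)`. -/
theorem center_of_R {K : Type*} [Ring K] {n : ℕ} (hn : 3 ≤ n)
    (J : AddSubgroup K) :
    ∀ M : Matrix (Fin n) (Fin n) K, Rmem J M →
      ((∀ X : Matrix (Fin n) (Fin n) K, Rmem J X → M * X = X * M) ↔
        ∃ a c : K, (∀ y ∈ J, a * y = 0 ∧ y * a = 0) ∧ c ∈ J ∧ (∀ b : K, c * b = b * c) ∧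
          M = Matrix.single ⟨n - 1, by omega⟩ ⟨0, by omega⟩ a +
              c • (1 : Matrix (Fin n) (Fin n) K)) := by
  intro M hM
  set last : Fin n := ⟨n - 1, by omega⟩
  set first : Fin n := ⟨0, by omega⟩
  have hlt : first < last := Fin.mk_lt_mk.mpr (by omega)
  constructor
  · intro hcomm
    refine ⟨M last first, M first first,
      fun y hy => apply_mul_eq_zero_of_forall_commute hcomm hlt.ne' hy, hM _ _ le_rfl,
      diag_mul_comm_of_forall_commute hcomm hlt, ?_⟩
    refine Matrix.eq_single_add_smul_one hlt.ne'
      (fun k => diag_eq_of_forall_commute hcomm k first)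
      fun k l hkl hne => apply_eq_zero_of_forall_commute hcomm hkl ?_
    by_contra! h
    exact hne (Prod.ext (Fin.ext (by simp [last]; omega)) (Fin.ext (by simp [first]; omega)))
  · rintro ⟨a, c, ha, -, hc, rfl⟩ X hX
    exact Matrix.commute_single_add_smul_one
      (fun k => (ha _ (hX first k (Fin.mk_le_mk.mpr k.val.zero_le))).1)
      (fun k => (ha _ (hX k last (Fin.mk_le_mk.mpr (by omega)))).2) hc
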